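/- Let G₁, G₂ be simple graphs on disjoint vertex sets with chosen vertices c₁ ∈ V₁, c₂ ∈ V₂, and let G_u be the disjoint union of G₁ and G₂ together with the added edge {c₁,c₂}. Then the graph state satisfies H_{c₁} ⊗ H_{c₂} |G_u⟩ = ± |G_H⟩, where G_H = ELC(c₁,c₂)(G_u). Concretely, with neighborhoods N(c₁) = {b₁^{(1)},…,b_n^{(1)}} in G₁ and N(c₂) = {b₁^{(2)},…,b_m^{(2)}} in G₂, |G_H⟩ is the graph state with quadratic phase p(x) = x_{c₁}x_{c₂} + x_{c₁}∑_{k'} x_{b_{k'}^{(2)}} + x_{c₂}∑_k x_{b_k^{(1)}} + ∑_{k,k'} x_{b_k^{(1)}} x_{b_{k'}^{(2)}} plus the phase terms from all edges of G₁ and G₂ not incident to c₁ or c₂. -/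

import Mathlib

open Matrix Sum

noncomputable section

/-- Local complementation of a simple graph at a vertex `a`. -/
def lc {V : Type*} (G : SimpleGraph V) (a : V) : SimpleGraph V where
  Adj b c := b ≠ c ∧ Xor' (G.Adj b c) (G.Adj a b ∧ G.Adj a c)
  symm := by
    constructor
    intro b c h
    obtain ⟨hne, hx⟩ := h
    refine ⟨hne.symm, ?_⟩
    rw [G.adj_comm c b, and_comm]
    exact hx
  loopless := by
    constructor
    intro b h
    exact h.1 rfl

instance {V : Type*} (G : SimpleGraph V) (a : V) [DecidableEq V]
    [DecidableRel G.Adj] : DecidableRel (lc G a).Adj := fun b c =>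
  inferInstanceAs (Decidable (b ≠ c ∧ Xor (G.Adj b c) (G.Adj a b ∧ G.Adj a c)))

/-- Edge local complementation on the edge `{a,b}`. -/
def elc {V : Type*} (G : SimpleGraph V) (a b : V) : SimpleGraph V :=
  lc (lc (lc G a) b) a

instance {V : Type*} (G : SimpleGraph V) (a b : V) [DecidableEq V]
    [DecidableRel G.Adj] : DecidableRel (elc G a b).Adj :=
  inferInstanceAs (DecidableRel (lc (lc (lc G a) b) a).Adj)

/-- The quadratic phase polynomial `p(x) = ∑_{{i,j}∈E} x_i x_j` of a graph. -/
def phasePoly {V : Type*} [Fintype V] [DecidableEq V] (G : SimpleGraph V)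
    [DecidableRel G.Adj] (x : V → Fin 2) : ℕ :=
  ∑ e ∈ G.edgeFinset,
    Sym2.lift ⟨fun i j => (x i).val * (x j).val, fun _ _ => mul_comm _ _⟩ e

/-- The graph state `|G⟩ = 2^{−N/2} ∑_x (−1)^{p(x)} |x⟩`. -/
def gs {V : Type*} [Fintype V] [DecidableEq V] (G : SimpleGraph V)
    [DecidableRel G.Adj] : (V → Fin 2) → ℂ :=
  fun x => ((1 / Real.sqrt 2 : ℝ) : ℂ) ^ (Fintype.card V) * (-1) ^ phasePoly G x

/-- The Hadamard gate acting on qubit `a` (identity on the other qubits). -/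
def hGate {V : Type*} [Fintype V] [DecidableEq V] (a : V) :
    Matrix (V → Fin 2) (V → Fin 2) ℂ :=
  fun x y => if ∀ i, i ≠ a → x i = y i
    then ((1 / Real.sqrt 2 : ℝ) : ℂ) * (-1) ^ ((x a).val * (y a).val)
    else 0

/-- The graph `G_u`: the disjoint union of `G₁` and `G₂` together with the
added edge `{c₁, c₂}` between the two chosen core vertices. -/
def joinGraphs {N₁ N₂ : ℕ} (G₁ : SimpleGraph (Fin N₁)) (G₂ : SimpleGraph (Fin N₂))
    (c₁ : Fin N₁) (c₂ : Fin N₂) : SimpleGraph (Fin N₁ ⊕ Fin N₂) where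
  Adj u v := match u, v with
    | .inl i, .inl j => G₁.Adj i j
    | .inr i, .inr j => G₂.Adj i j
    | .inl i, .inr j => i = c₁ ∧ j = c₂
    | .inr i, .inl j => i = c₂ ∧ j = c₁
  symm := by
    constructor
    rintro (i | i) (j | j) h
    · exact h.symm
    · exact ⟨h.2, h.1⟩
    · exact ⟨h.2, h.1⟩
    · exact h.symm
  loopless := by
    constructor
    rintro (i | i) h
    · exact G₁.loopless.irrefl i h
    · exact G₂.loopless.irrefl i h

instance {N₁ N₂ : ℕ} (G₁ : SimpleGraph (Fin N₁)) (G₂ : SimpleGraph (Fin N₂))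
    (c₁ : Fin N₁) (c₂ : Fin N₂) [DecidableRel G₁.Adj] [DecidableRel G₂.Adj] :
    DecidableRel (joinGraphs G₁ G₂ c₁ c₂).Adj := fun u v =>
  match u, v with
  | .inl i, .inl j => inferInstanceAs (Decidable (G₁.Adj i j))
  | .inr i, .inr j => inferInstanceAs (Decidable (G₂.Adj i j))
  | .inl i, .inr j => inferInstanceAs (Decidable (i = c₁ ∧ j = c₂))
  | .inr i, .inl j => inferInstanceAs (Decidable (i = c₂ ∧ j = c₁))

/-!
The phase polynomial is half the adjacency quadratic form `∑_{u,v} A_{uv} x_u x_v`. For `G_u` it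
reads `x_{c₁} x_{c₂} + x_{c₁} S₁ + x_{c₂} S₂ + R`, where `S_i` sums `x` over `N(c_i)` and `R` is the
phase of the edges away from `c₁, c₂`. In `ELC(c₁,c₂)(G_u)` the edges at `c₁, c₂` are replaced by
the complete bipartite graph between `{c₁} ∪ N(c₁)` and `{c₂} ∪ N(c₂)`, so its phase is
`(x_{c₁} + S₁)(x_{c₂} + S₂) + R`. The two Hadamards sum out the bits `s, t` at `c₁, c₂`, and
`∑_{s,t ∈ {0,1}} (-1)^{as + bt + st} = 2 (-1)^{ab}` turns the first phase into the second,
so `ε = 1`.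
-/

open Finset Function SimpleGraph

section EdgeSums

variable {V : Type*} [Fintype V] [DecidableEq V] (G : SimpleGraph V) [DecidableRel G.Adj]

theorem two_nsmul_sum_edgeFinset {M : Type*} [AddCommMonoid M] (f : V → V → M)
    (hf : ∀ i j, f i j = f j i) :
    2 • ∑ e ∈ G.edgeFinset, Sym2.lift ⟨f, hf⟩ e = ∑ i, ∑ j, if G.Adj i j then f i j else 0 := by
  have sum_darts : ∑ d : G.Dart, f d.fst d.snd = ∑ i, ∑ j, if G.Adj i j then f i j else 0 := by
    rw [← Fintype.sum_prod_type', ← sum_filter]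
    exact sum_bij' (fun d _ ↦ (d.fst, d.snd)) (fun p hp ↦ ⟨p, (mem_filter.1 hp).2⟩)
      (by simp) (by simp) (by simp) (by simp) (by simp)
  rw [← sum_darts, ← sum_fiberwise_of_maps_to (g := Dart.edge) (t := G.edgeFinset) (by simp),
    smul_sum]
  refine sum_congr rfl fun e he ↦ ?_
  induction e using Sym2.ind with
  | _ v w =>
    let d : G.Dart := ⟨(v, w), G.mem_edgeFinset.1 he⟩
    rw [show s(v, w) = d.edge from rfl, d.edge_fiber, sum_pair d.symm_ne.symm, two_nsmul]
    exact congrArg (f v w + ·) (hf v w)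

theorem sum_edgeFinset_eq_sum_neighborFinset_add {M : Type*} [AddCommMonoid M]
    (g : Sym2 V → M) (c : V) :
    ∑ e ∈ G.edgeFinset, g e =
      ∑ k ∈ G.neighborFinset c, g s(c, k) + ∑ e ∈ (G.deleteIncidenceSet c).edgeFinset, g e := by
  rw [edgeFinset_deleteIncidenceSet_eq_filter, ← sum_filter_add_sum_filter_not _ (c ∈ ·),
    ← incidenceFinset_eq_filter]
  congr 1
  symm
  refine sum_bij (fun k _ ↦ s(c, k)) (fun k hk ↦ ?_) (fun k _ k' _ h ↦ Sym2.congr_right.1 h)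
    (fun e he ↦ ?_) (fun _ _ ↦ rfl)
  · simpa [mk'_mem_incidenceSet_left_iff] using hk
  · obtain ⟨he, hce⟩ := (G.mem_incidenceFinset c e).1 he
    obtain ⟨k, rfl⟩ := Sym2.mem_iff_exists.1 hce
    exact ⟨k, by simpa using he, rfl⟩

theorem sum_ite_eq_or_adj {M : Type*} [AddCommMonoid M] (f : V → M) (c : V) :
    ∑ i, (if i = c ∨ G.Adj c i then f i else 0) = f c + ∑ k ∈ G.neighborFinset c, f k := by
  rw [← sum_filter, ← sum_insert (G.notMem_neighborFinset_self c)]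
  congr 1
  ext i
  simp

end EdgeSums

section PhasePoly

variable {V : Type*} [Fintype V] [DecidableEq V] (G : SimpleGraph V) [DecidableRel G.Adj]

theorem two_mul_phasePoly (x : V → Fin 2) :
    2 * phasePoly G x = ∑ i, ∑ j, if G.Adj i j then (x i).val * (x j).val else 0 :=
  two_nsmul_sum_edgeFinset G _ _

theorem phasePoly_eq_mul_sum_add (x : V → Fin 2) (c : V) :
    phasePoly G x = (x c).val * ∑ k ∈ G.neighborFinset c, (x k).val +
      phasePoly (G.deleteIncidenceSet c) x := by
  rw [phasePoly, sum_edgeFinset_eq_sum_neighborFinset_add G _ c, mul_sum]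
  rfl

theorem phasePoly_deleteIncidenceSet_update (x : V → Fin 2) (c : V) (t : Fin 2) :
    phasePoly (G.deleteIncidenceSet c) (update x c t) = phasePoly (G.deleteIncidenceSet c) x := by
  refine sum_congr rfl fun e he ↦ ?_
  induction e using Sym2.ind with
  | _ i j =>
    obtain ⟨-, hi, hj⟩ := G.deleteIncidenceSet_adj.1 (mem_edgeSet _ |>.1 (mem_edgeFinset.1 he))
    simp [update_of_ne hi, update_of_ne hj]

theorem phasePoly_update (x : V → Fin 2) (c : V) (t : Fin 2) :
    phasePoly G (update x c t) = t.val * ∑ k ∈ G.neighborFinset c, (x k).val +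
      phasePoly (G.deleteIncidenceSet c) x := by
  rw [phasePoly_eq_mul_sum_add G _ c, phasePoly_deleteIncidenceSet_update, update_self]
  congr 2
  exact sum_congr rfl fun k hk ↦ congrArg Fin.val
    (update_of_ne ((G.mem_neighborFinset c k).1 hk).ne' _ _)

theorem phasePoly_deleteIncidenceSet (x : V → Fin 2) (c : V) :
    phasePoly (G.deleteIncidenceSet c) x = ∑ e ∈ G.edgeFinset.filter (c ∉ ·),
      Sym2.lift ⟨fun i j ↦ (x i).val * (x j).val, fun _ _ ↦ mul_comm _ _⟩ e := by
  rw [phasePoly, edgeFinset_deleteIncidenceSet_eq_filter]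

end PhasePoly

section Hadamard

theorem sum_ite_forall_ne_eq {V α M : Type*} [Fintype V] [DecidableEq V] [Fintype α]
    [DecidableEq α] [AddCommMonoid M] (x : V → α) (a : V) (g : (V → α) → M) :
    ∑ y, (if ∀ i, i ≠ a → x i = y i then g y else 0) = ∑ t, g (update x a t) := by
  rw [← sum_filter, ← sum_image fun _ _ _ _ h ↦ update_injective x a h]
  congr 1
  ext y
  simp [update_eq_iff]

theorem ofReal_one_div_sqrt_two_sq : ((1 / √2 : ℝ) : ℂ) ^ 2 = 1 / 2 := by
  rw [← Complex.ofReal_pow, div_pow, one_pow, Real.sq_sqrt zero_le_two]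
  push_cast
  rfl

variable {V : Type*} [Fintype V] [DecidableEq V]

theorem hGate_mulVec (a : V) (ψ : (V → Fin 2) → ℂ) (x : V → Fin 2) :
    (hGate a *ᵥ ψ) x =
      ((1 / √2 : ℝ) : ℂ) * ∑ t : Fin 2, (-1) ^ ((x a).val * t.val) * ψ (update x a t) := by
  simp only [mulVec, dotProduct, hGate, ite_mul, zero_mul, sum_ite_forall_ne_eq, update_self,
    mul_sum, mul_assoc]

theorem hGate_mul_hGate_mulVec {a b : V} (hab : a ≠ b) (ψ : (V → Fin 2) → ℂ)
    (x : V → Fin 2) :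
    ((hGate a * hGate b) *ᵥ ψ) x = 1 / 2 * ∑ s : Fin 2, ∑ t : Fin 2,
      (-1) ^ ((x a).val * s.val + (x b).val * t.val) * ψ (update (update x a s) b t) := by
  simp only [← mulVec_mulVec, hGate_mulVec, update_of_ne hab.symm, mul_sum]
  refine sum_congr rfl fun s _ ↦ sum_congr rfl fun t _ ↦ ?_
  rw [pow_add, ← ofReal_one_div_sqrt_two_sq]
  ring

theorem sum_neg_one_pow_bilinear {R : Type*} [CommRing R] (a b : ℕ) :
    ∑ s : Fin 2, ∑ t : Fin 2, (-1 : R) ^ (a * s.val + b * t.val + s.val * t.val) =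
      2 * (-1) ^ (a * b) := by
  simp only [Fin.sum_univ_two, Fin.val_zero, Fin.val_one, mul_one, pow_zero, pow_add, pow_one,
    pow_mul]
  rcases Nat.even_or_odd a with ha | ha <;> rcases Nat.even_or_odd b with hb | hb <;>
    simp only [ha.neg_one_pow, hb.neg_one_pow, one_pow] <;> ring

theorem half_sum_neg_one_pow_mul (C : ℂ) (a b p q r : ℕ) :
    1 / 2 * ∑ s : Fin 2, ∑ t : Fin 2, (-1 : ℂ) ^ (a * s.val + b * t.val) *
        (C * (-1) ^ (s.val * t.val + s.val * p + t.val * q + r)) =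
      C * (-1) ^ ((a + p) * (b + q) + r) := by
  have term (s t : Fin 2) : (-1 : ℂ) ^ (a * s.val + b * t.val) *
        (C * (-1) ^ (s.val * t.val + s.val * p + t.val * q + r)) =
      C * (-1) ^ r * (-1) ^ ((a + p) * s.val + (b + q) * t.val + s.val * t.val) := by
    rw [mul_left_comm, ← pow_add, mul_assoc, ← pow_add]
    ring_nf
  simp only [term, ← mul_sum, sum_neg_one_pow_bilinear]
  ring

end Hadamard

theorem lc_adj {V : Type*} (G : SimpleGraph V) (a u v : V) :
    (lc G a).Adj u v ↔ u ≠ v ∧ Xor (G.Adj u v) (G.Adj a u ∧ G.Adj a v) :=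
  Iff.rfl

section JoinGraphs

variable {N₁ N₂ : ℕ} (G₁ : SimpleGraph (Fin N₁)) (G₂ : SimpleGraph (Fin N₂))
  (c₁ : Fin N₁) (c₂ : Fin N₂)

@[simp] theorem joinGraphs_adj_inl_inl (i j : Fin N₁) :
    (joinGraphs G₁ G₂ c₁ c₂).Adj (inl i) (inl j) ↔ G₁.Adj i j := Iff.rfl
@[simp] theorem joinGraphs_adj_inr_inr (i j : Fin N₂) :
    (joinGraphs G₁ G₂ c₁ c₂).Adj (inr i) (inr j) ↔ G₂.Adj i j := Iff.rfl
@[simp] theorem joinGraphs_adj_inl_inr (i : Fin N₁) (j : Fin N₂) :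
    (joinGraphs G₁ G₂ c₁ c₂).Adj (inl i) (inr j) ↔ i = c₁ ∧ j = c₂ := Iff.rfl
@[simp] theorem joinGraphs_adj_inr_inl (i : Fin N₂) (j : Fin N₁) :
    (joinGraphs G₁ G₂ c₁ c₂).Adj (inr i) (inl j) ↔ i = c₂ ∧ j = c₁ := Iff.rfl

theorem elc_joinGraphs_adj_inl_inl (i j : Fin N₁) :
    (elc (joinGraphs G₁ G₂ c₁ c₂) (inl c₁) (inr c₂)).Adj (inl i) (inl j) ↔
      (G₁.deleteIncidenceSet c₁).Adj i j := by
  simp only [elc, lc_adj, joinGraphs_adj_inl_inl, joinGraphs_adj_inl_inr, joinGraphs_adj_inr_inl,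
    deleteIncidenceSet_adj, ne_eq, inl.injEq, reduceCtorEq]
  grind [SimpleGraph.irrefl, SimpleGraph.adj_comm]

theorem elc_joinGraphs_adj_inr_inr (i j : Fin N₂) :
    (elc (joinGraphs G₁ G₂ c₁ c₂) (inl c₁) (inr c₂)).Adj (inr i) (inr j) ↔
      (G₂.deleteIncidenceSet c₂).Adj i j := by
  simp only [elc, lc_adj, joinGraphs_adj_inr_inr, joinGraphs_adj_inl_inr, joinGraphs_adj_inr_inl,
    deleteIncidenceSet_adj, ne_eq, inr.injEq, reduceCtorEq]
  grind [SimpleGraph.irrefl, SimpleGraph.adj_comm]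

theorem elc_joinGraphs_adj_inl_inr (i : Fin N₁) (j : Fin N₂) :
    (elc (joinGraphs G₁ G₂ c₁ c₂) (inl c₁) (inr c₂)).Adj (inl i) (inr j) ↔
      (i = c₁ ∨ G₁.Adj c₁ i) ∧ (j = c₂ ∨ G₂.Adj c₂ j) := by
  simp only [elc, lc_adj, joinGraphs_adj_inl_inl, joinGraphs_adj_inl_inr, joinGraphs_adj_inr_inl,
    joinGraphs_adj_inr_inr, ne_eq, inl.injEq, inr.injEq, reduceCtorEq]
  grind [SimpleGraph.irrefl, SimpleGraph.ne_of_adj]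

theorem elc_joinGraphs_adj_inr_inl (i : Fin N₂) (j : Fin N₁) :
    (elc (joinGraphs G₁ G₂ c₁ c₂) (inl c₁) (inr c₂)).Adj (inr i) (inl j) ↔
      (i = c₂ ∨ G₂.Adj c₂ i) ∧ (j = c₁ ∨ G₁.Adj c₁ j) := by
  rw [adj_comm, elc_joinGraphs_adj_inl_inr, and_comm]

end JoinGraphs

section JoinGraphState

variable {N₁ N₂ : ℕ} (G₁ : SimpleGraph (Fin N₁)) (G₂ : SimpleGraph (Fin N₂))
  (c₁ : Fin N₁) (c₂ : Fin N₂) [DecidableRel G₁.Adj] [DecidableRel G₂.Adj]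

theorem phasePoly_joinGraphs (x : Fin N₁ ⊕ Fin N₂ → Fin 2) :
    phasePoly (joinGraphs G₁ G₂ c₁ c₂) x =
      phasePoly G₁ (x ∘ inl) + phasePoly G₂ (x ∘ inr) + (x (inl c₁)).val * (x (inr c₂)).val := by
  apply Nat.eq_of_mul_eq_mul_left two_pos
  rw [mul_add, mul_add, two_mul_phasePoly, two_mul_phasePoly G₁, two_mul_phasePoly G₂]
  simp only [Fintype.sum_sum_type, sum_add_distrib, joinGraphs_adj_inl_inl, joinGraphs_adj_inr_inl,
    joinGraphs_adj_inl_inr, joinGraphs_adj_inr_inr, ite_and, sum_ite_irrel, sum_ite_eq', mem_univ,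
    if_true, sum_const_zero, Function.comp_apply]
  ring

theorem phasePoly_elc_joinGraphs (x : Fin N₁ ⊕ Fin N₂ → Fin 2) :
    phasePoly (elc (joinGraphs G₁ G₂ c₁ c₂) (inl c₁) (inr c₂)) x =
      ((x (inl c₁)).val + ∑ k ∈ G₁.neighborFinset c₁, (x (inl k)).val) *
          ((x (inr c₂)).val + ∑ k ∈ G₂.neighborFinset c₂, (x (inr k)).val) +
        (phasePoly (G₁.deleteIncidenceSet c₁) (x ∘ inl) +
          phasePoly (G₂.deleteIncidenceSet c₂) (x ∘ inr)) := by
  apply Nat.eq_of_mul_eq_mul_left two_pos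
  simp only [mul_add 2, two_mul_phasePoly, Fintype.sum_sum_type, sum_add_distrib,
    elc_joinGraphs_adj_inl_inl, elc_joinGraphs_adj_inr_inr, elc_joinGraphs_adj_inl_inr,
    elc_joinGraphs_adj_inr_inl, ← ite_zero_mul_ite_zero, ← sum_mul_sum, sum_ite_eq_or_adj,
    Function.comp_apply]
  ring

theorem phasePoly_joinGraphs_update (x : Fin N₁ ⊕ Fin N₂ → Fin 2) (s t : Fin 2) :
    phasePoly (joinGraphs G₁ G₂ c₁ c₂) (update (update x (inl c₁) s) (inr c₂) t) =
      s.val * t.val + s.val * ∑ k ∈ G₁.neighborFinset c₁, (x (inl k)).val +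
        t.val * ∑ k ∈ G₂.neighborFinset c₂, (x (inr k)).val +
        (phasePoly (G₁.deleteIncidenceSet c₁) (x ∘ inl) +
          phasePoly (G₂.deleteIncidenceSet c₂) (x ∘ inr)) := by
  have h₁ : update (update x (inl c₁) s) (inr c₂) t ∘ inl = update (x ∘ inl) c₁ s := by
    rw [update_comp_eq_of_forall_ne _ _ fun _ ↦ inl_ne_inr,
      update_comp_eq_of_injective _ inl_injective]
  have h₂ : update (update x (inl c₁) s) (inr c₂) t ∘ inr = update (x ∘ inr) c₂ t := by
    rw [update_comp_eq_of_injective _ inr_injective,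
      update_comp_eq_of_forall_ne _ _ fun _ ↦ inr_ne_inl]
  rw [phasePoly_joinGraphs, h₁, h₂, phasePoly_update, phasePoly_update, update_self,
    update_of_ne inl_ne_inr, update_self]
  simp only [Function.comp_apply]
  ring

theorem hGate_mul_hGate_mulVec_gs_joinGraphs :
    (hGate (inl c₁ : Fin N₁ ⊕ Fin N₂) * hGate (inr c₂)) *ᵥ gs (joinGraphs G₁ G₂ c₁ c₂) =
      gs (elc (joinGraphs G₁ G₂ c₁ c₂) (inl c₁) (inr c₂)) := by
  funext x
  rw [hGate_mul_hGate_mulVec inl_ne_inr]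
  simp only [gs, phasePoly_joinGraphs_update, phasePoly_elc_joinGraphs]
  exact half_sum_neg_one_pow_mul _ _ _ _ _ _

end JoinGraphState

/-- `H_{c₁} ⊗ H_{c₂} |G_u⟩ = ± |G_H⟩` where `G_H = ELC(c₁,c₂)(G_u)`,
and `|G_H⟩` is the graph state with the explicit quadratic phase
`p(x) = x_{c₁}x_{c₂} + x_{c₁}∑ x_{b^{(2)}} + x_{c₂}∑ x_{b^{(1)}}
+ ∑∑ x_{b^{(1)}}x_{b^{(2)}}` plus the phase terms from all edges of `G₁`, `G₂`
not incident to `c₁` or `c₂`. -/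
theorem hadamard_elc_graph_state {N₁ N₂ : ℕ}
    (G₁ : SimpleGraph (Fin N₁)) (G₂ : SimpleGraph (Fin N₂))
    (c₁ : Fin N₁) (c₂ : Fin N₂) [DecidableRel G₁.Adj] [DecidableRel G₂.Adj] :
    ∃ ε : ℂ, (ε = 1 ∨ ε = -1) ∧
      (hGate (inl c₁ : Fin N₁ ⊕ Fin N₂) * hGate (inr c₂ : Fin N₁ ⊕ Fin N₂)).mulVec
          (gs (joinGraphs G₁ G₂ c₁ c₂))
        = ε • gs (elc (joinGraphs G₁ G₂ c₁ c₂) (inl c₁) (inr c₂)) ∧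
      gs (elc (joinGraphs G₁ G₂ c₁ c₂) (inl c₁) (inr c₂))
        = fun x : Fin N₁ ⊕ Fin N₂ → Fin 2 =>
            ((1 / Real.sqrt 2 : ℝ) : ℂ) ^ (N₁ + N₂) *
              (-1) ^ ((x (inl c₁)).val * (x (inr c₂)).val
                + (x (inl c₁)).val * ∑ k ∈ G₂.neighborFinset c₂, (x (inr k)).val
                + (x (inr c₂)).val * ∑ k ∈ G₁.neighborFinset c₁, (x (inl k)).val
                + (∑ k ∈ G₁.neighborFinset c₁, ∑ k' ∈ G₂.neighborFinset c₂,
                    (x (inl k)).val * (x (inr k')).val)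
                + (∑ e ∈ G₁.edgeFinset.filter (fun e => c₁ ∉ e),
                    Sym2.lift ⟨fun i j => (x (inl i)).val * (x (inl j)).val,
                      fun _ _ => mul_comm _ _⟩ e)
                + ∑ e ∈ G₂.edgeFinset.filter (fun e => c₂ ∉ e),
                    Sym2.lift ⟨fun i j => (x (inr i)).val * (x (inr j)).val,
                      fun _ _ => mul_comm _ _⟩ e) := by
  refine ⟨1, Or.inl rfl, by rw [one_smul, hGate_mul_hGate_mulVec_gs_joinGraphs], ?_⟩
  funext x
  rw [gs, phasePoly_elc_joinGraphs, phasePoly_deleteIncidenceSet, phasePoly_deleteIncidenceSet,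
    Fintype.card_sum, Fintype.card_fin, Fintype.card_fin]
  congr 2
  simp only [Function.comp_apply, ← sum_mul_sum]
  ring
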